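/- arXiv:math/0301095 — 7 statements merged into one kernel-verified Lean document; each statement's English description precedes it below -/
import Mathlib

section
/- If V, V' ⊂ R^{n,n} are non-degenerate subspaces with the same signature, there exists an isometry f ∈ O(R^{n,n}) with fV = V' such that fΓ is V'-rational for every V-rational Narain lattice Γ. -/
/-!
Since `V` is non-degenerate, `ℝ^{n,n} = V ⊕ V^⊥` and `ℝ^{n,n} = V' ⊕ V'^⊥` orthogonally.
By Sylvester's law of inertia the number of positive squares of the form is the same in every
orthogonal basis; counting it on concatenated bases of the two splittings, and using that `V ≅ V'`
isometrically, shows that `V^⊥` and `V'^⊥` have the same signature, hence are isometric. Gluing the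
two isometries gives `f ∈ O(ℝ^{n,n})` extending `V ≅ V'` (Witt's extension theorem over `ℝ`).
Then `fΓ ∩ V' = f(Γ ∩ V)`, so `f` preserves rationality.
-/

/-- A Narain lattice in `ℝ^{n,n}`: an even unimodular ℤ-lattice of full rank `2n`. -/
def IsNarain (n : ℕ) (B : LinearMap.BilinForm ℝ ((Fin n → ℝ) × (Fin n → ℝ)))
    (Γ : Submodule ℤ ((Fin n → ℝ) × (Fin n → ℝ))) : Prop :=
  Submodule.span ℝ (Γ : Set ((Fin n → ℝ) × (Fin n → ℝ))) = ⊤ ∧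
  (∀ x ∈ Γ, ∀ y ∈ Γ, ∃ k : ℤ, B x y = (k : ℝ)) ∧
  (∀ x ∈ Γ, ∃ k : ℤ, B x x = 2 * (k : ℝ)) ∧
  ∃ bb : Module.Basis (Fin (2 * n)) ℤ ↥Γ,
    (Matrix.det (Matrix.of fun i j => B (bb i) (bb j))) ^ 2 = 1

open Module

theorem exists_equiv_apply_eq_of_card_pos_eq {ι ι' : Type*} [Fintype ι] [Fintype ι']
    {d : ι → ℝ} {d' : ι' → ℝ} (hd : ∀ i, d i = 1 ∨ d i = -1) (hd' : ∀ j, d' j = 1 ∨ d' j = -1)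
    (hcard : Fintype.card ι = Fintype.card ι')
    (hpos : Fintype.card {i // 0 < d i} = Fintype.card {j // 0 < d' j}) :
    ∃ σ : ι ≃ ι', ∀ i, d' (σ i) = d i := by
  classical
  have hnonpos : Fintype.card {i // ¬ 0 < d i} = Fintype.card {j // ¬ 0 < d' j} := by
    rw [Fintype.card_subtype_compl, Fintype.card_subtype_compl, hcard, hpos]
  let σ : ι ≃ ι' := ((Equiv.sumCompl _).symm.trans ((Fintype.equivOfCardEq hpos).sumCongr
    (Fintype.equivOfCardEq hnonpos))).trans (Equiv.sumCompl _)
  have hσ : ∀ i, 0 < d' (σ i) ↔ 0 < d i := by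
    intro i
    by_cases h : 0 < d i
    · simp [σ, h, Equiv.sumCompl_symm_apply_of_pos, (Fintype.equivOfCardEq hpos ⟨i, h⟩).2]
    · simp [σ, h, Equiv.sumCompl_symm_apply_of_neg, (Fintype.equivOfCardEq hnonpos ⟨i, h⟩).2]
  refine ⟨σ, fun i => ?_⟩
  have := hσ i
  rcases hd i with h | h <;> rcases hd' (σ i) with h' | h' <;> simp only [h, h'] at this ⊢ <;>
    norm_num at this

theorem Fintype.card_subtype_sum {α β : Type*} [Fintype α] [Fintype β] (p : α ⊕ β → Prop)
    [DecidablePred p] :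
    Fintype.card {x // p x} = Fintype.card {a // p (.inl a)} + Fintype.card {b // p (.inr b)} := by
  rw [← Fintype.card_sum]
  exact Fintype.card_congr Equiv.subtypeSum

namespace LinearMap.BilinForm

variable {E : Type*} [AddCommGroup E] [Module ℝ E] {B : LinearMap.BilinForm ℝ E}

theorem apply_self_eq_sum_of_isOrthoᵢ {ι : Type*} [Fintype ι] {v : Basis ι ℝ E}
    (hv : B.IsOrthoᵢ v) (x : E) : B x x = ∑ i, v.repr x i ^ 2 * B (v i) (v i) := by
  classical
  conv_lhs => rw [← v.sum_repr x]
  simp only [map_sum, LinearMap.sum_apply, map_smul, LinearMap.smul_apply, smul_eq_mul]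
  refine Finset.sum_congr rfl fun i _ => ?_
  rw [Finset.sum_eq_single i (fun j _ hji => by simp [hv hji]) (by simp)]
  ring

theorem finrank_add_finrank_le_of_pos_of_nonpos [FiniteDimensional ℝ E] {P N : Submodule ℝ E}
    (hP : ∀ x ∈ P, x ≠ 0 → 0 < B x x) (hN : ∀ x ∈ N, B x x ≤ 0) :
    finrank ℝ P + finrank ℝ N ≤ finrank ℝ E :=
  Submodule.finrank_add_finrank_le_of_disjoint <| Submodule.disjoint_def.2 fun x hxP hxN =>
    by_contra fun hx => (hN x hxN).not_gt (hP x hxP hx)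

theorem card_pos_le_of_isOrthoᵢ {ι ι' : Type*} [Fintype ι] [Fintype ι'] {v : Basis ι ℝ E}
    {w : Basis ι' ℝ E} (hv : B.IsOrthoᵢ v) (hw : B.IsOrthoᵢ w) :
    Fintype.card {i // 0 < B (v i) (v i)} ≤ Fintype.card {j // 0 < B (w j) (w j)} := by
  classical
  have : FiniteDimensional ℝ E := v.finiteDimensional_of_finite
  let S : Set ι := {i | 0 < B (v i) (v i)}
  let T : Set ι' := {j | ¬ 0 < B (w j) (w j)}
  have hP : ∀ x ∈ Submodule.span ℝ (v '' S), x ≠ 0 → 0 < B x x := by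
    intro x hx hx0
    have hsupp : ↑(v.repr x).support ⊆ S := v.mem_span_image.1 hx
    obtain ⟨i, hi⟩ : (v.repr x).support.Nonempty := by
      simpa [Finsupp.support_nonempty_iff] using hx0
    rw [apply_self_eq_sum_of_isOrthoᵢ hv]
    refine Finset.sum_pos' (fun j _ => ?_) ⟨i, Finset.mem_univ i, ?_⟩
    · by_cases hj : j ∈ (v.repr x).support
      · exact mul_nonneg (sq_nonneg _) (hsupp hj).le
      · simp [Finsupp.notMem_support_iff.1 hj]
    · exact mul_pos (sq_pos_of_ne_zero (Finsupp.mem_support_iff.1 hi)) (hsupp hi)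
  have hN : ∀ x ∈ Submodule.span ℝ (w '' T), B x x ≤ 0 := by
    intro x hx
    have hsupp : ↑(w.repr x).support ⊆ T := w.mem_span_image.1 hx
    rw [apply_self_eq_sum_of_isOrthoᵢ hw]
    refine Finset.sum_nonpos fun j _ => ?_
    by_cases hj : j ∈ (w.repr x).support
    · exact mul_nonpos_of_nonneg_of_nonpos (sq_nonneg _) (not_lt.1 (hsupp hj))
    · simp [Finsupp.notMem_support_iff.1 hj]
  have hle := finrank_add_finrank_le_of_pos_of_nonpos hP hN
  rw [Set.image_eq_range, Set.image_eq_range,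
    finrank_span_eq_card (b := fun i : S => v i) (v.linearIndependent.comp _ Subtype.val_injective),
    finrank_span_eq_card (b := fun j : T => w j) (w.linearIndependent.comp _ Subtype.val_injective),
    finrank_eq_card_basis w] at hle
  simp only [S, T, Set.coe_ofPred, Fintype.card_subtype_compl] at hle
  have := Fintype.card_subtype_le (fun j => 0 < B (w j) (w j))
  omega

theorem card_pos_eq_of_isOrthoᵢ {ι ι' : Type*} [Fintype ι] [Fintype ι'] {v : Basis ι ℝ E}
    {w : Basis ι' ℝ E} (hv : B.IsOrthoᵢ v) (hw : B.IsOrthoᵢ w) :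
    Fintype.card {i // 0 < B (v i) (v i)} = Fintype.card {j // 0 < B (w j) (w j)} :=
  (card_pos_le_of_isOrthoᵢ hv hw).antisymm (card_pos_le_of_isOrthoᵢ hw hv)

theorem exists_isOrthoᵢ_basis_apply_self_eq_one_or_neg_one [FiniteDimensional ℝ E]
    (hs : B.IsSymm) (hB : B.Nondegenerate) :
    ∃ v : Basis (Fin (finrank ℝ E)) ℝ E, B.IsOrthoᵢ v ∧
      ∀ i, B (v i) (v i) = 1 ∨ B (v i) (v i) = -1 := by
  obtain ⟨v, hv⟩ := exists_orthogonal_basis (isSymm_iff.1 hs)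
  have hne : ∀ i, B (v i) (v i) ≠ 0 := iIsOrtho.not_isOrtho_basis_self_of_nondegenerate hv hB
  let u i : ℝˣ := Units.mk0 (√|B (v i) (v i)|)⁻¹ (by simpa using hne i)
  refine ⟨v.unitsSMul u, fun i j hij => ?_, fun i => ?_⟩
  · simp [Function.onFun, Basis.unitsSMul_apply, Units.smul_def, show B (v i) (v j) = 0 from hv hij]
  have hsq : (√|B (v i) (v i)|)⁻¹ * ((√|B (v i) (v i)|)⁻¹ * B (v i) (v i)) =
      B (v i) (v i) / |B (v i) (v i)| := by
    rw [← mul_assoc, ← mul_inv, Real.mul_self_sqrt (abs_nonneg _), inv_mul_eq_div]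
  simp only [Basis.unitsSMul_apply, Units.smul_def, map_smul, LinearMap.smul_apply, smul_eq_mul,
    u, Units.val_mk0, hsq]
  rcases (hne i).lt_or_gt with h | h
  · simp [abs_of_neg h, h.ne]
  · simp [abs_of_pos h, h.ne']

theorem apply_basis_equiv_apply_basis_equiv {ι ι' : Type*} {v : Basis ι ℝ E} {w : Basis ι' ℝ E}
    (hv : B.IsOrthoᵢ v) (hw : B.IsOrthoᵢ w) (σ : ι ≃ ι')
    (hσ : ∀ i, B (w (σ i)) (w (σ i)) = B (v i) (v i)) (x y : E) :
    B (v.equiv w σ x) (v.equiv w σ y) = B x y := by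
  have hcompl : B.compl₁₂ (v.equiv w σ).toLinearMap (v.equiv w σ).toLinearMap = B := by
    refine ext_basis v fun i j => ?_
    simp only [compl₁₂_apply, LinearEquiv.coe_coe, Basis.equiv_apply]
    by_cases hij : i = j
    · subst hij; exact hσ i
    · rw [hv hij, hw (σ.injective.ne hij)]
  exact LinearMap.congr_fun₂ hcompl x y

theorem nondegenerate_restrict_orthogonal [FiniteDimensional ℝ E] (hr : B.IsRefl)
    (hB : B.Nondegenerate) {V : Submodule ℝ E} (hV : (B.restrict V).Nondegenerate) :
    (B.restrict (B.orthogonal V)).Nondegenerate :=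
  B.nondegenerate_restrict_of_disjoint_orthogonal hr <| by
    rw [B.orthogonal_orthogonal hB hr]
    exact (B.isCompl_orthogonal_of_restrict_nondegenerate hr hV).disjoint.symm

theorem isOrthoᵢ_basis_prod_orthogonal (hr : B.IsRefl) {V : Submodule ℝ E}
    (hV : IsCompl V (B.orthogonal V)) {ι κ : Type*} {bV : Basis ι ℝ V}
    {bW : Basis κ ℝ (B.orthogonal V)} (hbV : (B.restrict V).IsOrthoᵢ bV)
    (hbW : (B.restrict (B.orthogonal V)).IsOrthoᵢ bW) :
    B.IsOrthoᵢ ((bV.prod bW).map (Submodule.prodEquivOfIsCompl _ _ hV)) := by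
  have hVW : ∀ (v : V) (w : B.orthogonal V), B v w = 0 := fun v w => w.2 v v.2
  rintro (i | j) (i' | j') h
  · simpa [Function.onFun] using hbV fun h' => h (congrArg Sum.inl h')
  · simpa [Function.onFun] using hVW _ _
  · simpa [Function.onFun] using hr _ _ (hVW (bV i') (bW j))
  · simpa [Function.onFun] using hbW fun h' => h (congrArg Sum.inr h')

theorem exists_isometry_extends [FiniteDimensional ℝ E] (hs : B.IsSymm) (hB : B.Nondegenerate)
    {V V' : Submodule ℝ E} (hV : (B.restrict V).Nondegenerate) (e : V ≃ₗ[ℝ] V')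
    (he : ∀ v w : V, B (e v) (e w) = B v w) :
    ∃ f : E ≃ₗ[ℝ] E, (∀ x y, B (f x) (f y) = B x y) ∧
      f.toLinearMap ∘ₗ V.subtype = V'.subtype ∘ₗ e.toLinearMap := by
  have hr := hs.isRefl
  have hV' : (B.restrict V').Nondegenerate := by
    have : B.restrict V' = congr e (B.restrict V) := ext fun x y => by
      simp [← he (e.symm x) (e.symm y)]
    exact this ▸ hV.congr e
  obtain ⟨bV, hbV⟩ := exists_orthogonal_basis (isSymm_iff.1 (hs.restrict V))
  have hbV' : (B.restrict V').IsOrthoᵢ (bV.map e) := fun i j hij => by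
    simpa [Function.onFun, he] using hbV hij
  obtain ⟨bW, hbW, hbW1⟩ := exists_isOrthoᵢ_basis_apply_self_eq_one_or_neg_one (hs.restrict _)
    (nondegenerate_restrict_orthogonal hr hB hV)
  obtain ⟨bW', hbW', hbW'1⟩ := exists_isOrthoᵢ_basis_apply_self_eq_one_or_neg_one (hs.restrict _)
    (nondegenerate_restrict_orthogonal hr hB hV')
  have hc := B.isCompl_orthogonal_of_restrict_nondegenerate hr hV
  have hc' := B.isCompl_orthogonal_of_restrict_nondegenerate hr hV'
  let b := (bV.prod bW).map (Submodule.prodEquivOfIsCompl _ _ hc)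
  let b' := ((bV.map e).prod bW').map (Submodule.prodEquivOfIsCompl _ _ hc')
  have hb := isOrthoᵢ_basis_prod_orthogonal hr hc hbV hbW
  have hb' := isOrthoᵢ_basis_prod_orthogonal hr hc' hbV' hbW'
  -- Sylvester on `b` and `b'`; their `V`-parts have the same diagonal since `e` is an isometry.
  have hpos :
      Fintype.card {j // 0 < B (bW j) (bW j)} = Fintype.card {j // 0 < B (bW' j) (bW' j)} := by
    simpa [Fintype.card_subtype_sum, b, b', he] using card_pos_eq_of_isOrthoᵢ hb hb'
  have hcard : finrank ℝ (B.orthogonal V) = finrank ℝ (B.orthogonal V') := by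
    rw [finrank_orthogonal hB, finrank_orthogonal hB, e.finrank_eq]
  obtain ⟨σ, hσ⟩ := exists_equiv_apply_eq_of_card_pos_eq hbW1 hbW'1 (by simp [hcard]) hpos
  let f := b.equiv b' ((Equiv.refl _).sumCongr σ)
  have hfV : ∀ i, f (bV i) = e (bV i) := fun i => by
    simpa [f, b, b'] using b.equiv_apply (Sum.inl i) b' ((Equiv.refl _).sumCongr σ)
  refine ⟨f, apply_basis_equiv_apply_basis_equiv hb hb' _ ?_, bV.ext hfV⟩
  rintro (i | j)
  · simp [he]
  · simpa using hσ j

end LinearMap.BilinForm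

section SplitForm

variable {n : ℕ} {B : LinearMap.BilinForm ℝ ((Fin n → ℝ) × (Fin n → ℝ))}

theorem LinearMap.BilinForm.isSymm_of_apply_eq_split
    (hB : ∀ x y, B x y = ∑ i, x.1 i * y.1 i - ∑ i, x.2 i * y.2 i) : B.IsSymm :=
  ⟨fun x y => by simp only [hB, mul_comm]⟩

theorem LinearMap.BilinForm.nondegenerate_of_apply_eq_split
    (hB : ∀ x y, B x y = ∑ i, x.1 i * y.1 i - ∑ i, x.2 i * y.2 i) : B.Nondegenerate := by
  refine (isSymm_of_apply_eq_split hB).isRefl.nondegenerate_iff_separatingLeft.2 fun x hx => ?_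
  have h := hx (x.1, -x.2)
  simp only [hB, Pi.neg_apply, mul_neg, Finset.sum_neg_distrib, sub_neg_eq_add] at h
  obtain ⟨h1, h2⟩ := (add_eq_zero_iff_of_nonneg
    (Fintype.sum_nonneg fun i => mul_self_nonneg (x.1 i))
    (Fintype.sum_nonneg fun i => mul_self_nonneg (x.2 i))).1 h
  exact Prod.ext (dotProduct_self_eq_zero.1 h1) (dotProduct_self_eq_zero.1 h2)

end SplitForm

theorem Submodule.map_eq_of_comp_subtype_eq {R M : Type*} [Ring R] [AddCommGroup M] [Module R M]
    {V V' : Submodule R M} {f : M →ₗ[R] M} (e : V ≃ₗ[R] V')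
    (h : f ∘ₗ V.subtype = V'.subtype ∘ₗ e.toLinearMap) : V.map f = V' := by
  rw [← V.range_subtype, ← LinearMap.range_comp, h,
    LinearMap.range_comp_of_range_eq_top _ e.range, V'.range_subtype]

theorem stmt3_general (n : ℕ) (B : LinearMap.BilinForm ℝ ((Fin n → ℝ) × (Fin n → ℝ)))
    (hB : ∀ x y : (Fin n → ℝ) × (Fin n → ℝ),
      B x y = ∑ i, x.1 i * y.1 i - ∑ i, x.2 i * y.2 i)
    (V V' : Submodule ℝ ((Fin n → ℝ) × (Fin n → ℝ)))
    (hVnd : ∀ v ∈ V, (∀ w ∈ V, B v w = 0) → v = 0)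
    (hsig : ∃ e : ↥V ≃ₗ[ℝ] ↥V', ∀ v w : ↥V, B ↑(e v) ↑(e w) = B ↑v ↑w) :
    ∃ f : ((Fin n → ℝ) × (Fin n → ℝ)) ≃ₗ[ℝ] ((Fin n → ℝ) × (Fin n → ℝ)),
      (∀ x y, B (f x) (f y) = B x y) ∧ V.map f.toLinearMap = V' ∧
      ∀ Γ : Submodule ℤ ((Fin n → ℝ) × (Fin n → ℝ)), IsNarain n B Γ →
        Module.finrank ℤ ↥(Γ ⊓ V.restrictScalars ℤ) = Module.finrank ℝ ↥V →
        Module.finrank ℤ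
            ↥((Γ.map (f.toLinearMap.restrictScalars ℤ)) ⊓ V'.restrictScalars ℤ) =
          Module.finrank ℝ ↥V' := by
  obtain ⟨e, he⟩ := hsig
  have hs := LinearMap.BilinForm.isSymm_of_apply_eq_split hB
  have hV : (B.restrict V).Nondegenerate :=
    (hs.restrict V).isRefl.nondegenerate_iff_separatingLeft.2 fun x hx =>
      Subtype.ext (hVnd x x.2 fun w hw => hx ⟨w, hw⟩)
  obtain ⟨f, hf, hfe⟩ := LinearMap.BilinForm.exists_isometry_extends hs
    (LinearMap.BilinForm.nondegenerate_of_apply_eq_split hB) hV e he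
  have hfV := Submodule.map_eq_of_comp_subtype_eq e hfe
  refine ⟨f, hf, hfV, fun Γ _ hΓ => ?_⟩
  let g := f.toLinearMap.restrictScalars ℤ
  have hg : Function.Injective g := f.injective
  have hV'ℤ : V'.restrictScalars ℤ = (V.restrictScalars ℤ).map g := by
    rw [← hfV]; rfl
  rw [hV'ℤ, ← Submodule.map_inf g hg, ← (Submodule.equivMapOfInjective g hg _).finrank_eq, hΓ,
    e.finrank_eq]

/-- If `V, V' ⊂ ℝ^{n,n}` are non-degenerate subspaces of the same signature (expressed as
the existence of a linear isometry between them), then there is an isometry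
`f ∈ O(ℝ^{n,n})` with `f V = V'` such that `f Γ` is `V'`-rational for every `V`-rational
Narain lattice `Γ`. -/
theorem stmt3 (n : ℕ) (B : LinearMap.BilinForm ℝ ((Fin n → ℝ) × (Fin n → ℝ)))
    (hB : ∀ x y : (Fin n → ℝ) × (Fin n → ℝ),
      B x y = ∑ i, x.1 i * y.1 i - ∑ i, x.2 i * y.2 i)
    (V V' : Submodule ℝ ((Fin n → ℝ) × (Fin n → ℝ)))
    (hVnd : ∀ v ∈ V, (∀ w ∈ V, B v w = 0) → v = 0)
    (hV'nd : ∀ v ∈ V', (∀ w ∈ V', B v w = 0) → v = 0)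
    (hsig : ∃ e : ↥V ≃ₗ[ℝ] ↥V', ∀ v w : ↥V, B ↑(e v) ↑(e w) = B ↑v ↑w) :
    ∃ f : ((Fin n → ℝ) × (Fin n → ℝ)) ≃ₗ[ℝ] ((Fin n → ℝ) × (Fin n → ℝ)),
      (∀ x y, B (f x) (f y) = B x y) ∧ V.map f.toLinearMap = V' ∧
      ∀ Γ : Submodule ℤ ((Fin n → ℝ) × (Fin n → ℝ)), IsNarain n B Γ →
        Module.finrank ℤ ↥(Γ ⊓ V.restrictScalars ℤ) = Module.finrank ℝ ↥V →
        Module.finrank ℤ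
            ↥((Γ.map (f.toLinearMap.restrictScalars ℤ)) ⊓ V'.restrictScalars ℤ) =
          Module.finrank ℝ ↥V' :=
  stmt3_general n B hB V V' hVnd hsig
end

section
/- For binary quadratic forms P, Q (even, non-degenerate, identified with symmetric matrices [[2a,b],[b,2c]]), the abelian group Λ(P,Q) := { X ∈ M_2(Z) : X^t P = Q X^A } is nonzero if and only if disc P = disc Q, and in that case Λ(P,Q) has rank 2. -/
/-- The binary quadratic form `[a,b,c]` identified with the even symmetric matrix
`[[2a, b], [b, 2c]]`. -/
def formMatrix (a b c : ℤ) : Matrix (Fin 2) (Fin 2) ℤ := !![2 * a, b; b, 2 * c]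

/-- `Λ(P,Q) = { X ∈ M₂(ℤ) | Xᵀ P = Q Xᴬ }`, where `Xᴬ` is the adjugate. -/
def LambdaSet (P Q : Matrix (Fin 2) (Fin 2) ℤ) : Set (Matrix (Fin 2) (Fin 2) ℤ) :=
  {X | X.transpose * P = Q * X.adjugate}

lemma mem_lambda_iff (a b c a' b' c' : ℤ) (X : Matrix (Fin 2) (Fin 2) ℤ) :
    X ∈ LambdaSet (formMatrix a b c) (formMatrix a' b' c') ↔
      (2*a*X 0 0 + (b+b')*X 1 0 - 2*a'*X 1 1 = 0 ∧
       (b-b')*X 0 0 + 2*a'*X 0 1 + 2*c*X 1 0 = 0 ∧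
       2*a*X 0 1 + 2*c'*X 1 0 + (b-b')*X 1 1 = 0 ∧
       -(2*c')*X 0 0 + (b+b')*X 0 1 + 2*c*X 1 1 = 0) := by
  rw [LambdaSet, Set.mem_setOf_eq, ← Matrix.ext_iff]
  simp only [Fin.forall_fin_two, Matrix.mul_apply, Fin.sum_univ_two, formMatrix,
    Matrix.adjugate_fin_two, Matrix.transpose_apply, Matrix.of_apply, Matrix.cons_val',
    Matrix.cons_val_zero, Matrix.cons_val_one, Matrix.head_cons, Matrix.head_fin_const,
    Matrix.empty_val', Matrix.cons_val_fin_one]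
  constructor
  · rintro ⟨⟨h1, h2⟩, h3, h4⟩
    refine ⟨by linear_combination h1, by linear_combination h2, by linear_combination h3,
      by linear_combination h4⟩
  · rintro ⟨h1, h2, h3, h4⟩
    refine ⟨⟨by linear_combination h1, by linear_combination h2⟩,
      by linear_combination h3, by linear_combination h4⟩

lemma mem_lambda_of (a b c a' b' c' x y z w : ℤ)
    (h1 : 2*a*x + (b+b')*z - 2*a'*w = 0)
    (h2 : (b-b')*x + 2*a'*y + 2*c*z = 0)
    (h3 : 2*a*y + 2*c'*z + (b-b')*w = 0)
    (h4 : -(2*c')*x + (b+b')*y + 2*c*w = 0) :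
    !![x, y; z, w] ∈ LambdaSet (formMatrix a b c) (formMatrix a' b' c') := by
  rw [mem_lambda_iff]
  simp only [Matrix.of_apply, Matrix.cons_val', Matrix.cons_val_zero, Matrix.cons_val_one,
    Matrix.head_cons, Matrix.head_fin_const, Matrix.empty_val', Matrix.cons_val_fin_one]
  exact ⟨h1, h2, h3, h4⟩

lemma cancel2 {r x : ℤ} (hr : r ≠ 0) (h : 2 * r * x = 0) : x = 0 := by
  rcases mul_eq_zero.mp h with h' | h'
  · omega
  · exact h'

lemma eq_zero_of_entries (X : Matrix (Fin 2) (Fin 2) ℤ) (h00 : X 0 0 = 0) (h01 : X 0 1 = 0)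
    (h10 : X 1 0 = 0) (h11 : X 1 1 = 0) : X = 0 := by
  rw [Matrix.eta_fin_two X, h00, h01, h10, h11]
  ext i j
  fin_cases i <;> fin_cases j <;> simp

lemma indep_of_entries (u v : Matrix (Fin 2) (Fin 2) ℤ) (i j k l : Fin 2) (α β : ℤ)
    (hα : α ≠ 0) (hβ : β ≠ 0) (hu1 : u i j = α) (hv1 : v i j = 0) (hu2 : u k l = 0)
    (hv2 : v k l = β) : ∀ s t : ℤ, s • u + t • v = 0 → s = 0 ∧ t = 0 := by
  intro s t h
  have e1 : s * u i j + t * v i j = 0 := by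
    have := congrFun (congrFun h i) j
    simpa only [Matrix.add_apply, Matrix.smul_apply, smul_eq_mul, Matrix.zero_apply] using this
  have e2 : s * u k l + t * v k l = 0 := by
    have := congrFun (congrFun h k) l
    simpa only [Matrix.add_apply, Matrix.smul_apply, smul_eq_mul, Matrix.zero_apply] using this
  rw [hu1, hv1, mul_zero, add_zero] at e1
  rw [hu2, hv2, mul_zero, zero_add] at e2
  exact ⟨(mul_eq_zero.mp e1).resolve_right hα, (mul_eq_zero.mp e2).resolve_right hβ⟩

lemma disc_eq_of_mem (a b c a' b' c' : ℤ) (X : Matrix (Fin 2) (Fin 2) ℤ)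
    (hX : X ∈ LambdaSet (formMatrix a b c) (formMatrix a' b' c')) (hne : X ≠ 0) :
    b ^ 2 - 4 * a * c = b' ^ 2 - 4 * a' * c' := by
  rw [mem_lambda_iff] at hX
  obtain ⟨h1, h2, h3, h4⟩ := hX
  by_contra hD
  have hD' : b ^ 2 - 4 * a * c - (b' ^ 2 - 4 * a' * c') ≠ 0 := fun h => hD (by linarith)
  apply hne
  have e00 : (b ^ 2 - 4 * a * c - (b' ^ 2 - 4 * a' * c')) * X 0 0 = 0 := by
    linear_combination (-2*c)*h1 + (b+b')*h2 + (-2*a')*h4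
  have e01 : (b ^ 2 - 4 * a * c - (b' ^ 2 - 4 * a' * c')) * X 0 1 = 0 := by
    linear_combination (2*c')*h2 + (-2*c)*h3 + (b-b')*h4
  have e10 : (b ^ 2 - 4 * a * c - (b' ^ 2 - 4 * a' * c')) * X 1 0 = 0 := by
    linear_combination (b-b')*h1 + (-2*a)*h2 + (2*a')*h3
  have e11 : (b ^ 2 - 4 * a * c - (b' ^ 2 - 4 * a' * c')) * X 1 1 = 0 := by
    linear_combination (-2*c')*h1 + (b+b')*h3 + (-2*a)*h4
  exact eq_zero_of_entries X ((mul_eq_zero.mp e00).resolve_left hD')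
    ((mul_eq_zero.mp e01).resolve_left hD') ((mul_eq_zero.mp e10).resolve_left hD')
    ((mul_eq_zero.mp e11).resolve_left hD')

lemma key (a b c a' b' c' : ℤ) (hP : b ^ 2 - 4 * a * c ≠ 0)
    (hd : b ^ 2 - 4 * a * c = b' ^ 2 - 4 * a' * c') :
    ∃ u v : Matrix (Fin 2) (Fin 2) ℤ, ∃ i₁ j₁ i₂ j₂ : Fin 2,
      u ∈ LambdaSet (formMatrix a b c) (formMatrix a' b' c') ∧
      v ∈ LambdaSet (formMatrix a b c) (formMatrix a' b' c') ∧
      (∀ s t : ℤ, s • u + t • v = 0 → s = 0 ∧ t = 0) ∧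
      (∀ X ∈ LambdaSet (formMatrix a b c) (formMatrix a' b' c'),
        X i₁ j₁ = 0 → X i₂ j₂ = 0 → X = 0) := by
  by_cases ha : a ≠ 0
  · refine ⟨!![-(b+b'), -2*c'; 2*a, 0], !![2*a', b'-b; 0, 2*a], 1, 0, 1, 1,
      mem_lambda_of _ _ _ _ _ _ _ _ _ _ (by ring) (by linear_combination -hd) (by ring) (by ring),
      mem_lambda_of _ _ _ _ _ _ _ _ _ _ (by ring) (by ring) (by ring) (by linear_combination -hd),
      indep_of_entries _ _ 1 0 1 1 (2*a) (2*a) (by omega) (by omega) (by simp) (by simp)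
        (by simp) (by simp), ?_⟩
    intro X hX hx1 hx2
    rw [mem_lambda_iff] at hX
    obtain ⟨h1, h2, h3, h4⟩ := hX
    refine eq_zero_of_entries X ?_ ?_ hx1 hx2
    · exact cancel2 ha (by linear_combination h1 - (b+b')*hx1 + 2*a'*hx2)
    · exact cancel2 ha (by linear_combination h3 - 2*c'*hx1 - (b-b')*hx2)
  push_neg at ha
  subst ha
  by_cases hc : c ≠ 0
  · refine ⟨!![2*c, 0; b'-b, 2*c'], !![0, 2*c; -2*a', -(b+b')], 0, 0, 0, 1,
      mem_lambda_of _ _ _ _ _ _ _ _ _ _ (by linear_combination -hd) (by ring) (by ring) (by ring),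
      mem_lambda_of _ _ _ _ _ _ _ _ _ _ (by ring) (by ring) (by linear_combination -hd) (by ring),
      indep_of_entries _ _ 0 0 0 1 (2*c) (2*c) (by omega) (by omega) (by simp) (by simp)
        (by simp) (by simp), ?_⟩
    intro X hX hx1 hx2
    rw [mem_lambda_iff] at hX
    obtain ⟨h1, h2, h3, h4⟩ := hX
    refine eq_zero_of_entries X hx1 hx2 ?_ ?_
    · exact cancel2 hc (by linear_combination h2 - (b-b')*hx1 - 2*a'*hx2)
    · exact cancel2 hc (by linear_combination h4 + 2*c'*hx1 - (b+b')*hx2)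
  push_neg at hc
  subst hc
  have hb : b ≠ 0 := by intro h; exact hP (by rw [h]; ring)
  by_cases ha' : a' ≠ 0
  · refine ⟨!![2*a', b'-b; 0, 0], !![0, 0; -2*a', -(b+b')], 0, 0, 1, 0,
      mem_lambda_of _ _ _ _ _ _ _ _ _ _ (by ring) (by ring) (by ring) (by linear_combination -hd),
      mem_lambda_of _ _ _ _ _ _ _ _ _ _ (by ring) (by ring) (by linear_combination -hd) (by ring),
      indep_of_entries _ _ 0 0 1 0 (2*a') (-2*a') (by omega) (by omega) (by simp) (by simp)
        (by simp) (by simp), ?_⟩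
    intro X hX hx1 hx2
    rw [mem_lambda_iff] at hX
    obtain ⟨h1, h2, h3, h4⟩ := hX
    refine eq_zero_of_entries X hx1 ?_ hx2 ?_
    · exact cancel2 ha' (by linear_combination h2 - (b-b')*hx1 - 2*0*hx2)
    · exact cancel2 ha' (by linear_combination -h1 + (b+b')*hx2)
  push_neg at ha'
  subst ha'
  by_cases hc' : c' ≠ 0
  · refine ⟨!![-(b+b'), -2*c'; 0, 0], !![0, 0; b'-b, 2*c'], 0, 1, 1, 1,
      mem_lambda_of _ _ _ _ _ _ _ _ _ _ (by ring) (by linear_combination -hd) (by ring) (by ring),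
      mem_lambda_of _ _ _ _ _ _ _ _ _ _ (by linear_combination -hd) (by ring) (by ring) (by ring),
      indep_of_entries _ _ 0 1 1 1 (-2*c') (2*c') (by omega) (by omega) (by simp) (by simp)
        (by simp) (by simp), ?_⟩
    intro X hX hx1 hx2
    rw [mem_lambda_iff] at hX
    obtain ⟨h1, h2, h3, h4⟩ := hX
    refine eq_zero_of_entries X ?_ hx1 ?_ hx2
    · exact cancel2 hc' (by linear_combination -h4 + (b+b')*hx1)
    · exact cancel2 hc' (by linear_combination h3 - (b-b')*hx2)
  push_neg at hc'
  subst hc'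
  have hb2 : (b' - b) * (b' + b) = 0 := by linear_combination -hd
  rcases mul_eq_zero.mp hb2 with h | h
  · have hbe : b' = b := by linarith
    subst hbe
    refine ⟨!![1, 0; 0, 0], !![0, 0; 0, 1], 0, 0, 1, 1,
      mem_lambda_of _ _ _ _ _ _ _ _ _ _ (by ring) (by ring) (by ring) (by ring),
      mem_lambda_of _ _ _ _ _ _ _ _ _ _ (by ring) (by ring) (by ring) (by ring),
      indep_of_entries _ _ 0 0 1 1 1 1 one_ne_zero one_ne_zero (by simp) (by simp)
        (by simp) (by simp), ?_⟩
    intro X hX hx1 hx2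
    rw [mem_lambda_iff] at hX
    obtain ⟨h1, h2, h3, h4⟩ := hX
    refine eq_zero_of_entries X hx1 ?_ ?_ hx2
    · exact cancel2 hb (by linear_combination h4)
    · exact cancel2 hb (by linear_combination h1)
  · have hbe : b' = -b := by linarith
    subst hbe
    refine ⟨!![0, 1; 0, 0], !![0, 0; 1, 0], 0, 1, 1, 0,
      mem_lambda_of _ _ _ _ _ _ _ _ _ _ (by ring) (by ring) (by ring) (by ring),
      mem_lambda_of _ _ _ _ _ _ _ _ _ _ (by ring) (by ring) (by ring) (by ring),
      indep_of_entries _ _ 0 1 1 0 1 1 one_ne_zero one_ne_zero (by simp) (by simp)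
        (by simp) (by simp), ?_⟩
    intro X hX hx1 hx2
    rw [mem_lambda_iff] at hX
    obtain ⟨h1, h2, h3, h4⟩ := hX
    refine eq_zero_of_entries X ?_ hx1 hx2 ?_
    · exact cancel2 hb (by linear_combination h2)
    · exact cancel2 hb (by linear_combination h3)

def lambdaSubmodule (a b c a' b' c' : ℤ) : Submodule ℤ (Matrix (Fin 2) (Fin 2) ℤ) where
  carrier := LambdaSet (formMatrix a b c) (formMatrix a' b' c')
  add_mem' := by
    intro X Y hX hY
    show X + Y ∈ LambdaSet (formMatrix a b c) (formMatrix a' b' c')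
    have hX' : X ∈ LambdaSet (formMatrix a b c) (formMatrix a' b' c') := hX
    have hY' : Y ∈ LambdaSet (formMatrix a b c) (formMatrix a' b' c') := hY
    rw [mem_lambda_iff] at hX' hY' ⊢
    clear hX hY
    rename' hX' => hX, hY' => hY
    obtain ⟨p1, p2, p3, p4⟩ := hX
    obtain ⟨q1, q2, q3, q4⟩ := hY
    simp only [Matrix.add_apply]
    exact ⟨by linear_combination p1 + q1, by linear_combination p2 + q2,
      by linear_combination p3 + q3, by linear_combination p4 + q4⟩
  zero_mem' := by
    show (0 : Matrix (Fin 2) (Fin 2) ℤ) ∈ LambdaSet (formMatrix a b c) (formMatrix a' b' c')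
    rw [mem_lambda_iff]
    norm_num
  smul_mem' := by
    intro t X hX
    show t • X ∈ LambdaSet (formMatrix a b c) (formMatrix a' b' c')
    have hX' : X ∈ LambdaSet (formMatrix a b c) (formMatrix a' b' c') := hX
    rw [mem_lambda_iff] at hX' ⊢
    clear hX
    rename' hX' => hX
    obtain ⟨p1, p2, p3, p4⟩ := hX
    simp only [Matrix.smul_apply, smul_eq_mul]
    exact ⟨by linear_combination t * p1, by linear_combination t * p2,
      by linear_combination t * p3, by linear_combination t * p4⟩

lemma span_lambda (a b c a' b' c' : ℤ) :
    Submodule.span ℤ (LambdaSet (formMatrix a b c) (formMatrix a' b' c')) =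
      lambdaSubmodule a b c a' b' c' :=
  Submodule.span_eq (lambdaSubmodule a b c a' b' c')

/-- For non-degenerate binary quadratic forms `P = [a,b,c]`, `Q = [a',b',c']`, the abelian
group `Λ(P,Q)` is nonzero iff `disc P = disc Q`, in which case it has rank `2`. -/
theorem stmt8 (a b c a' b' c' : ℤ) (hP : b ^ 2 - 4 * a * c ≠ 0)
    (hQ : b' ^ 2 - 4 * a' * c' ≠ 0) :
    ((∃ X ∈ LambdaSet (formMatrix a b c) (formMatrix a' b' c'), X ≠ 0) ↔
      b ^ 2 - 4 * a * c = b' ^ 2 - 4 * a' * c') ∧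
    (b ^ 2 - 4 * a * c = b' ^ 2 - 4 * a' * c' →
      Module.rank ℤ
        ↥(Submodule.span ℤ (LambdaSet (formMatrix a b c) (formMatrix a' b' c'))) = 2) := by
  constructor
  · constructor
    · rintro ⟨X, hX, hne⟩
      exact disc_eq_of_mem a b c a' b' c' X hX hne
    · intro hd
      obtain ⟨u, v, i₁, j₁, i₂, j₂, hu, hv, hind, -⟩ := key a b c a' b' c' hP hd
      refine ⟨u, hu, fun h0 => ?_⟩
      exact one_ne_zero (hind 1 0 (by simp [h0])).1
  · intro hd
    obtain ⟨u, v, i₁, j₁, i₂, j₂, hu, hv, hind, hinj⟩ := key a b c a' b' c' hP hd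
    rw [span_lambda]
    set K := lambdaSubmodule a b c a' b' c' with hK
    -- upper bound
    have hmemK : ∀ X : Matrix (Fin 2) (Fin 2) ℤ,
        X ∈ K ↔ X ∈ LambdaSet (formMatrix a b c) (formMatrix a' b' c') := fun X => Iff.rfl
    have hle : Module.rank ℤ K ≤ 2 := by
      let φ : K →ₗ[ℤ] (Fin 2 → ℤ) :=
        { toFun := fun Y => ![Y.1 i₁ j₁, Y.1 i₂ j₂]
          map_add' := by
            intro Y Z
            funext k
            fin_cases k <;> simp [Matrix.add_apply]
          map_smul' := by
            intro t Y
            funext k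
            fin_cases k <;> simp [Matrix.smul_apply] }
      have hφ : Function.Injective φ := by
        rw [injective_iff_map_eq_zero]
        intro Y hY
        have e1 : Y.1 i₁ j₁ = 0 := by
          have := congrFun hY 0
          simpa [φ] using this
        have e2 : Y.1 i₂ j₂ = 0 := by
          have := congrFun hY 1
          simpa [φ] using this
        exact Subtype.ext (hinj Y.1 ((hmemK Y.1).mp Y.2) e1 e2)
      calc Module.rank ℤ K ≤ Module.rank ℤ (Fin 2 → ℤ) := φ.rank_le_of_injective hφ
        _ = 2 := by simp
    have hge : (2 : Cardinal) ≤ Module.rank ℤ K := by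
      have huK : u ∈ K := (hmemK u).mpr hu
      have hvK : v ∈ K := (hmemK v).mpr hv
      have hli : LinearIndependent ℤ ![(⟨u, huK⟩ : K), ⟨v, hvK⟩] := by
        rw [LinearIndependent.pair_iff]
        intro s t hst
        apply hind s t
        have := congrArg Subtype.val hst
        simpa using this
      have := hli.cardinal_le_rank
      simpa using this
    exact le_antisymm hle hge
end

section
/- Let P, Q be non-degenerate binary quadratic forms of the same discriminant. If P and Q are both positive definite or both negative definite, then Λ(P,Q) with the form 2·det is positive definite; if one of P, Q is positive definite and the other negative definite, then Λ(P,Q) is negative definite. -/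
theorem lambda_key (a b c a' b' c' : ℤ) (X : Matrix (Fin 2) (Fin 2) ℤ)
    (hX : X ∈ LambdaSet (formMatrix a b c) (formMatrix a' b' c')) :
    2*a' * X 1 1 = 2*a * X 0 0 + (b+b') * X 1 0 ∧
    2*a' * X 0 1 = (b'-b) * X 0 0 - 2*c * X 1 0 ∧
    2 * a' * X.det = 2*(a * X 0 0^2 + b * X 0 0 * X 1 0 + c * X 1 0^2) := by
  simp only [LambdaSet, Set.mem_setOf_eq] at hX
  have h1 := congrFun (congrFun hX 0) 0
  have h2 := congrFun (congrFun hX 0) 1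
  simp [formMatrix, Matrix.mul_apply, Fin.sum_univ_two, Matrix.transpose_apply,
    Matrix.adjugate_fin_two] at h1 h2
  refine ⟨by linarith, by linarith, ?_⟩
  rw [Matrix.det_fin_two]
  linear_combination -(X 0 0 * h1 + X 1 0 * h2)

theorem lambda_pos (a b c a' b' c' : ℤ)
    (hP : b ^ 2 - 4 * a * c < 0) (hQ : b' ^ 2 - 4 * a' * c' < 0)
    (X : Matrix (Fin 2) (Fin 2) ℤ)
    (hX : X ∈ LambdaSet (formMatrix a b c) (formMatrix a' b' c'))
    (hne : X ≠ 0) : 0 < a * a' * X.det := by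
  have ha : a ≠ 0 := by rintro rfl; nlinarith [sq_nonneg b]
  have ha' : a' ≠ 0 := by rintro rfl; nlinarith [sq_nonneg b']
  obtain ⟨k1, k2, k3⟩ := lambda_key a b c a' b' c' X hX
  set x := X 0 0; set y := X 0 1; set z := X 1 0; set w := X 1 1
  have hq : a' * X.det = a * x^2 + b * x * z + c * z^2 := by linarith
  have e : 4 * a * (a * x^2 + b * x * z + c * z^2)
      = (2*a*x + b*z)^2 - (b^2 - 4*a*c) * z^2 := by ring
  rcases eq_or_ne (a * x^2 + b * x * z + c * z^2) 0 with h0 | h0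
  · exfalso
    have hz2 : z ^ 2 = 0 := by
      have h0a : (2*a*x + b*z)^2 = (b^2 - 4*a*c) * z^2 := by
        linear_combination 4*a*h0 - e
      refine le_antisymm ?_ (sq_nonneg z)
      linarith [sq_nonneg (2*a*x + b*z), h0a,
        mul_le_mul_of_nonneg_right (show (1:ℤ) ≤ 4*a*c - b^2 by linarith) (sq_nonneg z)]
    have hz : z = 0 := by
      have := pow_eq_zero_iff (n := 2) (by norm_num) |>.1 hz2
      exact this
    have hx : x = 0 := by
      rw [hz] at h0
      have hax : a * x ^ 2 = 0 := by linarith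
      rcases mul_eq_zero.1 hax with h | h
      · exact absurd h ha
      · exact pow_eq_zero_iff (n := 2) (by norm_num) |>.1 h
    have hw : w = 0 := by
      rw [hx, hz] at k1
      have h2 : 2 * a' * w = 0 := by linarith
      rcases mul_eq_zero.1 h2 with h | h
      · exact absurd (by omega : a' = 0) ha'
      · exact h
    have hy : y = 0 := by
      rw [hx, hz] at k2
      have h2 : 2 * a' * y = 0 := by linarith
      rcases mul_eq_zero.1 h2 with h | h
      · exact absurd (by omega : a' = 0) ha'
      · exact h
    apply hne
    rw [Matrix.eta_fin_two X]
    show (!![x, y; z, w] : Matrix (Fin 2) (Fin 2) ℤ) = 0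
    rw [hx, hy, hz, hw]
    norm_num [Matrix.ext_iff.symm, Fin.forall_fin_two]
  · have hge : 0 ≤ 4 * a * (a * x^2 + b * x * z + c * z^2) := by
      nlinarith [sq_nonneg (2*a*x + b*z), sq_nonneg z]
    have hne4 : 4 * a * (a * x^2 + b * x * z + c * z^2) ≠ 0 := by
      intro h
      rcases mul_eq_zero.1 h with h | h
      · rcases mul_eq_zero.1 h with h | h
        · norm_num at h
        · exact ha h
      · exact h0 h
    have hpos : 0 < 4 * a * (a * x^2 + b * x * z + c * z^2) := lt_of_le_of_ne hge (Ne.symm hne4)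
    have key : a * a' * X.det = a * (a * x^2 + b * x * z + c * z^2) := by
      rw [mul_assoc, hq]
    linarith

/-- For non-degenerate binary quadratic forms `P = [a,b,c]`, `Q = [a',b',c']` of the same
discriminant: if `P`, `Q` are both positive definite or both negative definite then
`Λ(P,Q)` (with the form `2·det`) is positive definite, and if one is positive definite and
the other negative definite then `Λ(P,Q)` is negative definite. -/
theorem stmt12 (a b c a' b' c' : ℤ)
    (hP : b ^ 2 - 4 * a * c < 0) (hQ : b' ^ 2 - 4 * a' * c' < 0)
    (hsame : b ^ 2 - 4 * a * c = b' ^ 2 - 4 * a' * c') :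
    (((0 < a ∧ 0 < a') ∨ (a < 0 ∧ a' < 0)) →
      ∀ X ∈ LambdaSet (formMatrix a b c) (formMatrix a' b' c'),
        X ≠ 0 → 0 < 2 * X.det) ∧
    (((0 < a ∧ a' < 0) ∨ (a < 0 ∧ 0 < a')) →
      ∀ X ∈ LambdaSet (formMatrix a b c) (formMatrix a' b' c'),
        X ≠ 0 → 2 * X.det < 0) := by
  constructor
  · rintro (⟨h1, h2⟩ | ⟨h1, h2⟩) X hX hne <;>
      have h := lambda_pos a b c a' b' c' hP hQ X hX hne
    · nlinarith [mul_pos h1 h2]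
    · nlinarith [mul_pos_of_neg_of_neg h1 h2]
  · rintro (⟨h1, h2⟩ | ⟨h1, h2⟩) X hX hne <;>
      have h := lambda_pos a b c a' b' c' hP hQ X hX hne
    · nlinarith [mul_neg_of_pos_of_neg h1 h2]
    · nlinarith [mul_neg_of_neg_of_pos h1 h2]
end

section
/- For any binary quadratic forms P, Q of the same discriminant, the orthogonal complement of Λ(P,Q) inside M_2(Z) (with form 2·det) equals Λ(P,-Q); equivalently, if X^t P = -Q X^A and Y^t P = Q Y^A, then det(X+Y) = det(X) + det(Y). -/
/-- The bilinear form on `M₂(ℤ)` associated to the quadratic form `2·det`. -/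
def detBil (X Y : Matrix (Fin 2) (Fin 2) ℤ) : ℤ := (X + Y).det - X.det - Y.det

lemma transpose_fin_two' (p q r s : ℤ) :
    (!![p, q; r, s] : Matrix (Fin 2) (Fin 2) ℤ).transpose = !![p, r; q, s] := by
  ext i j
  fin_cases i <;> fin_cases j <;> rfl

lemma adjugate_sub_fin_two (A B : Matrix (Fin 2) (Fin 2) ℤ) :
    (A - B).adjugate = A.adjugate - B.adjugate := by
  rw [Matrix.adjugate_fin_two, Matrix.adjugate_fin_two, Matrix.adjugate_fin_two]
  ext i j
  fin_cases i <;> fin_cases j <;> simp [Matrix.sub_apply] <;> ring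

lemma stmt13_key (a b c a' b' c' : ℤ) (hP : b ^ 2 - 4 * a * c ≠ 0)
    (hsame : b ^ 2 - 4 * a * c = b' ^ 2 - 4 * a' * c') :
    ∀ X Y : Matrix (Fin 2) (Fin 2) ℤ,
      X ∈ LambdaSet (formMatrix a b c) (-(formMatrix a' b' c')) →
      Y ∈ LambdaSet (formMatrix a b c) (formMatrix a' b' c') →
      (X + Y).det = X.det + Y.det := by
  intro X Y hX hY
  have hX' : X.transpose * formMatrix a b c = -(formMatrix a' b' c') * X.adjugate := hX
  have hY' : Y.transpose * formMatrix a b c = formMatrix a' b' c' * Y.adjugate := hY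
  have key : (X + Y).transpose * formMatrix a b c =
      formMatrix a' b' c' * (Y - X).adjugate := by
    rw [Matrix.transpose_add, Matrix.add_mul, hX', hY', adjugate_sub_fin_two,
      Matrix.mul_sub, Matrix.neg_mul]
    abel
  have hdet := congrArg Matrix.det key
  rw [Matrix.det_mul, Matrix.det_mul, Matrix.det_adjugate, Matrix.det_transpose] at hdet
  have hPdet : (formMatrix a b c).det = -(b ^ 2 - 4 * a * c) := by
    simp [formMatrix, Matrix.det_fin_two_of]; ring
  have hQdet : (formMatrix a' b' c').det = -(b ^ 2 - 4 * a * c) := by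
    simp [formMatrix, Matrix.det_fin_two_of, hsame]; ring
  rw [hPdet, hQdet] at hdet
  norm_num at hdet
  have h1 : (X + Y).det = (Y - X).det := by
    rw [mul_comm] at hdet
    exact mul_left_cancel₀ (a := 4 * a * c - b ^ 2) (fun h => hP (by linarith)) hdet
  have expand : (X + Y).det + (Y - X).det = 2 * (X.det + Y.det) := by
    simp only [Matrix.det_fin_two, Matrix.add_apply, Matrix.sub_apply]
    ring
  omega

/-- For non-degenerate binary quadratic forms `P`, `Q` of the same discriminant, the
orthogonal complement of `Λ(P,Q)` in `M₂(ℤ)` (with the form `2·det`) is `Λ(P,-Q)`;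
equivalently, if `Xᵀ P = -Q Xᴬ` and `Yᵀ P = Q Yᴬ` then `det (X+Y) = det X + det Y`. -/
theorem stmt13 (a b c a' b' c' : ℤ) (hP : b ^ 2 - 4 * a * c ≠ 0)
    (hQ : b' ^ 2 - 4 * a' * c' ≠ 0)
    (hsame : b ^ 2 - 4 * a * c = b' ^ 2 - 4 * a' * c') :
    ({Y : Matrix (Fin 2) (Fin 2) ℤ |
        ∀ X ∈ LambdaSet (formMatrix a b c) (formMatrix a' b' c'), detBil X Y = 0} =
      LambdaSet (formMatrix a b c) (-(formMatrix a' b' c'))) ∧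
    (∀ X Y : Matrix (Fin 2) (Fin 2) ℤ,
      X ∈ LambdaSet (formMatrix a b c) (-(formMatrix a' b' c')) →
      Y ∈ LambdaSet (formMatrix a b c) (formMatrix a' b' c') →
      (X + Y).det = X.det + Y.det) := by
  refine ⟨?_, stmt13_key a b c a' b' c' hP hsame⟩
  ext Y
  constructor
  · intro hY
    have m1 : (!![2 * a', b' - b; 0, 2 * a] : Matrix (Fin 2) (Fin 2) ℤ) ∈
        LambdaSet (formMatrix a b c) (formMatrix a' b' c') := by
      show _ = _
      rw [Matrix.adjugate_fin_two_of, transpose_fin_two', formMatrix, formMatrix,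
        Matrix.mul_fin_two, Matrix.mul_fin_two]
      ext i j
      fin_cases i <;> fin_cases j <;> simp <;> linarith [hsame]
    have m2 : (!![0, -(2 * c); 2 * a', b + b'] : Matrix (Fin 2) (Fin 2) ℤ) ∈
        LambdaSet (formMatrix a b c) (formMatrix a' b' c') := by
      show _ = _
      rw [Matrix.adjugate_fin_two_of, transpose_fin_two', formMatrix, formMatrix,
        Matrix.mul_fin_two, Matrix.mul_fin_two]
      ext i j
      fin_cases i <;> fin_cases j <;> simp <;> linarith [hsame]
    have m3 : (!![2 * c, 0; b' - b, 2 * c'] : Matrix (Fin 2) (Fin 2) ℤ) ∈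
        LambdaSet (formMatrix a b c) (formMatrix a' b' c') := by
      show _ = _
      rw [Matrix.adjugate_fin_two_of, transpose_fin_two', formMatrix, formMatrix,
        Matrix.mul_fin_two, Matrix.mul_fin_two]
      ext i j
      fin_cases i <;> fin_cases j <;> simp <;> linarith [hsame]
    have m4 : (!![-(b + b'), -(2 * c'); 2 * a, 0] : Matrix (Fin 2) (Fin 2) ℤ) ∈
        LambdaSet (formMatrix a b c) (formMatrix a' b' c') := by
      show _ = _
      rw [Matrix.adjugate_fin_two_of, transpose_fin_two', formMatrix, formMatrix,
        Matrix.mul_fin_two, Matrix.mul_fin_two]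
      ext i j
      fin_cases i <;> fin_cases j <;> simp <;> linarith [hsame]
    have h1 := hY _ m1
    have h2 := hY _ m2
    have h3 := hY _ m3
    have h4 := hY _ m4
    simp [detBil, Matrix.det_fin_two, Matrix.add_apply] at h1 h2 h3 h4
    show _ = _
    rw [Matrix.adjugate_fin_two]
    ext i j
    fin_cases i <;> fin_cases j <;>
      simp [formMatrix, Matrix.mul_apply, Fin.sum_univ_two, Matrix.transpose_apply,
        Matrix.neg_apply]
    · linear_combination h1
    · linear_combination h2
    · linear_combination -h4
    · linear_combination h3
  · intro hY X hX
    have := stmt13_key a b c a' b' c' hP hsame Y X hY hX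
    simp only [detBil]
    rw [add_comm X Y]
    omega
end

section
/- Suppose P = [a,b,c] and Q^∨ = [a',b,c'] are concordant binary forms of the same discriminant with gcd(a,a') = 1 (so a,a' ≠ 0, aa'≠0, and a' divides c). Then Λ(P,Q) is the Z-span of the matrices [[a',-b],[0,a]] and [[0,-c/a'],[1,0]]. -/
lemma transpose_fin_two'_s14 (x y z w : ℤ) :
    (!![x, y; z, w]).transpose = !![x, z; y, w] := by
  ext i j; fin_cases i <;> fin_cases j <;> rfl

/-- If `P = [a,b,c]` and `Q^∨ = [a',b,c']` (so `Q = [a',-b,c']`) are concordant forms of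
the same discriminant with `gcd(a,a') = 1`, then `Λ(P,Q)` is the ℤ-span of
`[[a',-b],[0,a]]` and `[[0,-c/a'],[1,0]]`. -/
theorem stmt14 (a b c a' c' : ℤ) (hne : a * a' ≠ 0)
    (hnd : b ^ 2 - 4 * a * c ≠ 0)
    (hdisc : b ^ 2 - 4 * a * c = b ^ 2 - 4 * a' * c')
    (hgcd : Int.gcd a a' = 1) (hdvd : a' ∣ c) :
    LambdaSet (formMatrix a b c) (formMatrix a' (-b) c') =
      ↑(Submodule.span ℤ
        ({!![a', -b; 0, a], !![0, -(c / a'); 1, 0]} : Set (Matrix (Fin 2) (Fin 2) ℤ))) := by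
  have ha : a ≠ 0 := left_ne_zero_of_mul hne
  have ha' : a' ≠ 0 := right_ne_zero_of_mul hne
  have hac : a * c = a' * c' := by linarith
  obtain ⟨k, hk⟩ := hdvd
  have hk' : c / a' = k := by rw [hk]; exact Int.mul_ediv_cancel_left k ha'
  have hc' : c' = a * k := by
    have h2 : a' * (a * k) = a' * c' := by rw [← hac, hk]; ring
    exact (mul_left_cancel₀ ha' h2).symm
  have hcop : IsCoprime a a' := Int.isCoprime_iff_gcd_eq_one.mpr hgcd
  have hspan : ∀ u v : ℤ,
      u • !![a', -b; 0, a] + v • !![(0:ℤ), -k; 1, 0] = !![u * a', -(u * b) - v * k; v, u * a] := by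
    intro u v
    ext i j
    fin_cases i <;> fin_cases j <;> simp <;> ring
  ext X
  set x := X 0 0 with hx
  set y := X 0 1 with hy
  set z := X 1 0 with hz
  set w := X 1 1 with hw
  have hXeq : X = !![x, y; z, w] := by
    ext i j; fin_cases i <;> fin_cases j <;> rfl
  simp only [LambdaSet, Set.mem_setOf_eq, SetLike.mem_coe, Submodule.mem_span_pair]
  rw [hk', hXeq]
  constructor
  · intro hX
    simp only [formMatrix, transpose_fin_two'_s14, Matrix.adjugate_fin_two,
      Matrix.mul_fin_two, ← Matrix.ext_iff, Fin.forall_fin_two] at hX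
    obtain ⟨⟨e00, e01⟩, e10, e11⟩ := hX
    simp only [Matrix.cons_val', Matrix.cons_val_zero, Matrix.cons_val_one,
      Matrix.head_cons, Matrix.head_fin_const, Matrix.empty_val',
      Matrix.cons_val_fin_one, Matrix.of_apply] at e00 e01 e10 e11
    have h1 : a * x = a' * w := by linarith
    have hda : a' ∣ a * x := ⟨w, by linarith⟩
    obtain ⟨u, hu⟩ := (hcop.symm).dvd_of_dvd_mul_left hda
    refine ⟨u, z, ?_⟩
    have hwu : w = u * a := by
      have : a' * w = a' * (u * a) := by rw [← h1, hu]; ring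
      exact mul_left_cancel₀ ha' this
    have hyu : y = -(u * b) - z * k := by
      have h3 : (2 * a') * y = (2 * a') * (-(u * b) - z * k) := by
        linear_combination e01 - 2 * b * hu - 2 * z * hk
      exact mul_left_cancel₀ (mul_ne_zero two_ne_zero ha') h3
    rw [hspan]
    ext i j
    fin_cases i <;> fin_cases j <;> simp [hu, hwu, hyu] <;> ring
  · rintro ⟨u, v, hX⟩
    rw [hspan] at hX
    rw [← hX]
    simp only [formMatrix, transpose_fin_two'_s14, Matrix.adjugate_fin_two,
      Matrix.mul_fin_two]
    ext i j
    fin_cases i <;> fin_cases j <;> simp [hk, hc'] <;> ring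
end

section
/- Λ(P,Q) is primitive as an abstract lattice if and only if both (1/λ)P and (1/λ)Q are primitive binary quadratic forms, where λ is the gcd of the contents of P and Q. -/
/-- The content `gcd(a,b,c)` of the binary form `[a,b,c]`. -/
def content (a b c : ℤ) : ℕ := Int.gcd (Int.gcd a b) c

/-- An even lattice (given as a subset `L` of `M₂(ℤ)` with the form `2·det`) is primitive
as an abstract lattice iff no integer `m > 1` makes `(1/m)` times the form still even
integral. -/
def PrimitiveLat (L : Set (Matrix (Fin 2) (Fin 2) ℤ)) : Prop :=
  ¬ ∃ m : ℕ, 1 < m ∧ (∀ X ∈ L, ∀ Y ∈ L, (m : ℤ) ∣ detBil X Y) ∧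
      (∀ X ∈ L, (2 * (m : ℤ)) ∣ 2 * X.det)

/-!
Since `Λ(kP, kQ) = Λ(P, Q)`, one may divide out `λ` and assume that the contents of `P`
and `Q` are coprime. Every `X ∈ Λ(P, Q)` satisfies `Xᵀ P X = det X • Q`, and
`adj X ∈ Λ(Q, P)`; hence `content P ∣ det X · content Q` and `content Q ∣ det X · content P`,
so `content P · content Q` divides every determinant and `Λ` is imprimitive unless both
forms are primitive.
Conversely, equal discriminants give `b' = b + 2t`, and then `!![a', t; 0, a] ∈ Λ(P, Q)` has
determinant `a a'`. Transporting this along `SL₂(ℤ)` acting on `P` and on `Q` shows that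
`det` on `Λ(P, Q)` takes the value `P(v) Q(v')` for all primitive vectors `v, v'`; a
primitive form takes a value prime to a given `p` at one of `(1,0)`, `(0,1)`, `(1,1)`.
-/

open Matrix

lemma transpose_mul_mul_eq_det_smul {n R : Type*} [Fintype n] [DecidableEq n] [CommRing R]
    {P Q X : Matrix n n R} (hX : Xᵀ * P = Q * X.adjugate) : Xᵀ * P * X = X.det • Q := by
  rw [hX, Matrix.mul_assoc, adjugate_mul, Matrix.mul_smul, Matrix.mul_one]

lemma adjugate_adjugate_fin_two {R : Type*} [CommRing R] (X : Matrix (Fin 2) (Fin 2) R) :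
    X.adjugate.adjugate = X := by
  simp [adjugate_adjugate']

section

variable {P Q X Y h : Matrix (Fin 2) (Fin 2) ℤ}

lemma mem_LambdaSet : X ∈ LambdaSet P Q ↔ Xᵀ * P = Q * X.adjugate := Iff.rfl

lemma add_mem_LambdaSet (hX : X ∈ LambdaSet P Q) (hY : Y ∈ LambdaSet P Q) :
    X + Y ∈ LambdaSet P Q := by
  have hadj : (X + Y).adjugate = X.adjugate + Y.adjugate := by
    rw [adjugate_fin_two, adjugate_fin_two X, adjugate_fin_two Y]
    ext i j
    fin_cases i <;> fin_cases j <;> simp <;> ring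
  simp only [mem_LambdaSet] at *
  rw [transpose_add, Matrix.add_mul, hadj, Matrix.mul_add, hX, hY]

lemma adjugate_mem_LambdaSet (hP : Pᵀ = P) (hQ : Qᵀ = Q) (hX : X ∈ LambdaSet P Q) :
    X.adjugate ∈ LambdaSet Q P := by
  have := congrArg transpose hX
  simp only [transpose_mul, transpose_transpose, hP, hQ] at this
  rw [mem_LambdaSet, adjugate_adjugate_fin_two, ← this]

lemma mul_mem_LambdaSet (hX : X ∈ LambdaSet (hᵀ * P * h) Q) (hh : h.det = 1) :
    h * X ∈ LambdaSet P Q := by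
  rw [mem_LambdaSet, adjugate_mul_distrib, ← Matrix.mul_assoc, ← show Xᵀ * _ = _ from hX,
    transpose_mul]
  simp only [Matrix.mul_assoc, mul_adjugate, hh, one_smul, Matrix.mul_one]

lemma mul_adjugate_mem_LambdaSet (hX : X ∈ LambdaSet P (hᵀ * Q * h)) (hh : h.det = 1) :
    X * h.adjugate ∈ LambdaSet P Q := by
  rw [mem_LambdaSet, transpose_mul, Matrix.mul_assoc, show Xᵀ * P = _ from hX,
    adjugate_mul_distrib, adjugate_adjugate_fin_two, adjugate_transpose]
  simp only [← Matrix.mul_assoc, adjugate_mul, det_transpose, hh, one_smul, Matrix.one_mul]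

lemma LambdaSet_smul {d : ℤ} (hd : d ≠ 0) : LambdaSet (d • P) (d • Q) = LambdaSet P Q := by
  ext X
  simp only [mem_LambdaSet, Matrix.mul_smul, Matrix.smul_mul]
  exact smul_right_injective _ hd |>.eq_iff

end

section FormMatrix

lemma formMatrix_transpose (a b c : ℤ) : (formMatrix a b c)ᵀ = formMatrix a b c := by
  ext i j; fin_cases i <;> fin_cases j <;> rfl

lemma smul_formMatrix (d a b c : ℤ) :
    d • formMatrix a b c = formMatrix (d * a) (d * b) (d * c) := by
  ext i j; fin_cases i <;> fin_cases j <;> simp [formMatrix] <;> ring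

lemma formMatrix_injective {a b c a' b' c' : ℤ} (h : formMatrix a b c = formMatrix a' b' c') :
    a = a' ∧ b = b' ∧ c = c' := by
  have h00 := congrFun₂ h 0 0
  have h01 := congrFun₂ h 0 1
  have h11 := congrFun₂ h 1 1
  simp only [formMatrix, of_apply, cons_val', cons_val_zero, cons_val_one, empty_val',
    cons_val_fin_one] at h00 h01 h11
  omega

lemma transpose_mul_formMatrix_mul (a b c x y z w : ℤ) :
    !![x, y; z, w]ᵀ * formMatrix a b c * !![x, y; z, w] =
      formMatrix (a * x ^ 2 + b * x * z + c * z ^ 2)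
        (2 * a * x * y + b * (x * w + y * z) + 2 * c * z * w)
        (a * y ^ 2 + b * y * w + c * w ^ 2) := by
  ext i j; fin_cases i <;> fin_cases j <;> simp [formMatrix, mul_apply, Fin.sum_univ_two] <;> ring

end FormMatrix

section Content

lemma natCast_dvd_content_iff {n : ℕ} {a b c : ℤ} :
    n ∣ content a b c ↔ (n : ℤ) ∣ a ∧ (n : ℤ) ∣ b ∧ (n : ℤ) ∣ c := by
  simp only [content, Int.dvd_gcd_iff, Int.natCast_dvd_natCast, and_assoc]

lemma content_eq_zero_iff {a b c : ℤ} : content a b c = 0 ↔ a = 0 ∧ b = 0 ∧ c = 0 := by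
  simpa using natCast_dvd_content_iff (n := 0) (a := a) (b := b) (c := c)

lemma content_ne_zero_of_discrim_ne_zero {a b c : ℤ} (h : discrim a b c ≠ 0) :
    content a b c ≠ 0 := by
  rintro h0
  obtain ⟨rfl, rfl, rfl⟩ := content_eq_zero_iff.1 h0
  simp [discrim] at h

lemma content_mul (d a b c : ℤ) :
    content (d * a) (d * b) (d * c) = d.natAbs * content a b c := by
  simp only [content, Int.gcd, Int.natAbs_mul, Int.natAbs_natCast, Nat.gcd_mul_left]

lemma content_dvd_content_transform (a b c x y z w : ℤ) :
    content a b c ∣ content (a * x ^ 2 + b * x * z + c * z ^ 2)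
      (2 * a * x * y + b * (x * w + y * z) + 2 * c * z * w)
      (a * y ^ 2 + b * y * w + c * w ^ 2) := by
  obtain ⟨ha, hb, hc⟩ := natCast_dvd_content_iff.1 (dvd_refl (content a b c))
  refine natCast_dvd_content_iff.2 ?_
  generalize (content a b c : ℤ) = k at ha hb hc ⊢
  obtain ⟨a₀, rfl⟩ := ha
  obtain ⟨b₀, rfl⟩ := hb
  obtain ⟨c₀, rfl⟩ := hc
  exact ⟨⟨a₀ * x ^ 2 + b₀ * x * z + c₀ * z ^ 2, by ring⟩,
    ⟨2 * a₀ * x * y + b₀ * (x * w + y * z) + 2 * c₀ * z * w, by ring⟩,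
    ⟨a₀ * y ^ 2 + b₀ * y * w + c₀ * w ^ 2, by ring⟩⟩

lemma discrim_mul (d a b c : ℤ) : discrim (d * a) (d * b) (d * c) = d ^ 2 * discrim a b c := by
  simp only [discrim]; ring

end Content

section

variable {a b c a' b' c' : ℤ} {X : Matrix (Fin 2) (Fin 2) ℤ}

lemma content_dvd_natAbs_det_mul_content
    (hX : X ∈ LambdaSet (formMatrix a b c) (formMatrix a' b' c')) :
    content a b c ∣ X.det.natAbs * content a' b' c' := by
  have h := transpose_mul_mul_eq_det_smul hX
  obtain ⟨x, y, z, w, rfl⟩ : ∃ x y z w, X = !![x, y; z, w] := ⟨_, _, _, _, eta_fin_two X⟩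
  rw [smul_formMatrix, transpose_mul_formMatrix_mul] at h
  obtain ⟨ha, hb, hc⟩ := formMatrix_injective h
  rw [← content_mul, ← ha, ← hb, ← hc]
  exact content_dvd_content_transform a b c x y z w

lemma mul_content_dvd_det (hcop : (content a b c).Coprime (content a' b' c'))
    (hX : X ∈ LambdaSet (formMatrix a b c) (formMatrix a' b' c')) :
    ((content a b c * content a' b' c' : ℕ) : ℤ) ∣ X.det := by
  have h₁ := content_dvd_natAbs_det_mul_content hX
  have h₂ := content_dvd_natAbs_det_mul_content
    (adjugate_mem_LambdaSet (formMatrix_transpose ..) (formMatrix_transpose ..) hX)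
  rw [det_adjugate, Fintype.card_fin, pow_one] at h₂
  exact Int.natCast_dvd.2 (hcop.mul_dvd_of_dvd_of_dvd (hcop.dvd_of_dvd_mul_right h₁)
    (hcop.symm.dvd_of_dvd_mul_right h₂))

lemma exists_eq_add_two_mul_of_discrim_eq (h : discrim a b c = discrim a' b' c') :
    ∃ t, b' = b + 2 * t := by
  unfold discrim at h
  have hsq : Even (b' ^ 2 - b ^ 2) := ⟨2 * (a' * c' - a * c), by linear_combination -h⟩
  obtain ⟨t, ht⟩ : Even (b' - b) := by simpa [Int.even_sub, Int.even_pow] using hsq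
  exact ⟨t, by linear_combination ht⟩

lemma exists_mem_LambdaSet_det_eq_mul (h : discrim a b c = discrim a' b' c') :
    ∃ X ∈ LambdaSet (formMatrix a b c) (formMatrix a' b' c'), X.det = a * a' := by
  obtain ⟨t, rfl⟩ := exists_eq_add_two_mul_of_discrim_eq h
  have hK : a' * c' = t ^ 2 + b * t + a * c := by
    unfold discrim at h
    exact mul_left_cancel₀ (four_ne_zero (α := ℤ)) (by linear_combination h)
  refine ⟨!![a', t; 0, a], ?_, by rw [det_fin_two_of]; ring⟩
  rw [mem_LambdaSet, adjugate_fin_two_of]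
  ext i j
  fin_cases i <;> fin_cases j <;> simp [formMatrix, mul_apply, Fin.sum_univ_two] <;>
    first | ring1 | linear_combination -2 * hK

lemma discrim_transform (a b c x y z w : ℤ) :
    discrim (a * x ^ 2 + b * x * z + c * z ^ 2)
        (2 * a * x * y + b * (x * w + y * z) + 2 * c * z * w) (a * y ^ 2 + b * y * w + c * w ^ 2) =
      (x * w - y * z) ^ 2 * discrim a b c := by
  unfold discrim; ring

lemma exists_mem_LambdaSet_det_eq_mul_values (h : discrim a b c = discrim a' b' c')
    {x y z w x' y' z' w' : ℤ} (hg : x * w - y * z = 1) (hh : x' * w' - y' * z' = 1) :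
    ∃ X ∈ LambdaSet (formMatrix a b c) (formMatrix a' b' c'),
      X.det = (a * x ^ 2 + b * x * z + c * z ^ 2) * (a' * x' ^ 2 + b' * x' * z' + c' * z' ^ 2) := by
  obtain ⟨X₀, hX₀, hdet⟩ := exists_mem_LambdaSet_det_eq_mul
    (by rw [discrim_transform, discrim_transform, hg, hh, h] :
      discrim _ _ (a * y ^ 2 + b * y * w + c * w ^ 2) =
        discrim _ _ (a' * y' ^ 2 + b' * y' * w' + c' * w' ^ 2))
  rw [← transpose_mul_formMatrix_mul, ← transpose_mul_formMatrix_mul] at hX₀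
  have hg' : (!![x, y; z, w]).det = 1 := by rw [det_fin_two_of, hg]
  have hh' : (!![x', y'; z', w']).det = 1 := by rw [det_fin_two_of, hh]
  refine ⟨_, mul_adjugate_mem_LambdaSet (mul_mem_LambdaSet hX₀ hg') hh', ?_⟩
  rw [det_mul, det_mul, det_adjugate, hg', hh', hdet]
  simp

lemma exists_det_eq_one_not_dvd {p : ℕ} (hp : p.Prime) (h : content a b c = 1) :
    ∃ x y z w : ℤ, x * w - y * z = 1 ∧ ¬ (p : ℤ) ∣ a * x ^ 2 + b * x * z + c * z ^ 2 := by
  by_contra! hall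
  have ha : (p : ℤ) ∣ a := by simpa using hall 1 0 0 1 (by ring)
  have hc : (p : ℤ) ∣ c := by simpa using hall 0 (-1) 1 0 (by ring)
  have hb : (p : ℤ) ∣ b := by
    have habc : (p : ℤ) ∣ a + b + c := by simpa using hall 1 0 1 1 (by ring)
    have := dvd_sub (dvd_sub habc ha) hc
    rwa [show a + b + c - a - c = b by ring] at this
  exact hp.one_lt.ne' (Nat.dvd_one.1 (h ▸ natCast_dvd_content_iff.2 ⟨ha, hb, hc⟩))

lemma exists_mem_LambdaSet_not_dvd_det (h : discrim a b c = discrim a' b' c')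
    (h₁ : content a b c = 1) (h₂ : content a' b' c' = 1) {p : ℕ} (hp : p.Prime) :
    ∃ X ∈ LambdaSet (formMatrix a b c) (formMatrix a' b' c'), ¬ (p : ℤ) ∣ X.det := by
  obtain ⟨x, y, z, w, hg, hu⟩ := exists_det_eq_one_not_dvd hp h₁
  obtain ⟨x', y', z', w', hh, hv⟩ := exists_det_eq_one_not_dvd hp h₂
  obtain ⟨X, hX, hdet⟩ := exists_mem_LambdaSet_det_eq_mul_values h hg hh
  refine ⟨X, hX, ?_⟩
  rw [hdet, (Nat.prime_iff_prime_int.1 hp).dvd_mul]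
  exact not_or_intro hu hv

end

lemma primitiveLat_iff {L : Set (Matrix (Fin 2) (Fin 2) ℤ)}
    (hL : ∀ X ∈ L, ∀ Y ∈ L, X + Y ∈ L) :
    PrimitiveLat L ↔ ¬ ∃ m : ℕ, 1 < m ∧ ∀ X ∈ L, (m : ℤ) ∣ X.det := by
  simp only [PrimitiveLat, mul_dvd_mul_iff_left (two_ne_zero (α := ℤ))]
  refine not_congr (exists_congr fun m => and_congr_right fun _ =>
    ⟨And.right, fun h => ⟨fun X hX Y hY => ?_, h⟩⟩)
  exact dvd_sub (dvd_sub (h _ (hL X hX Y hY)) (h X hX)) (h Y hY)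

lemma primitiveLat_LambdaSet_iff_of_coprime {a b c a' b' c' : ℤ} (hP : discrim a b c ≠ 0)
    (hsame : discrim a b c = discrim a' b' c')
    (hcop : (content a b c).Coprime (content a' b' c')) :
    PrimitiveLat (LambdaSet (formMatrix a b c) (formMatrix a' b' c')) ↔
      content a b c = 1 ∧ content a' b' c' = 1 := by
  rw [primitiveLat_iff fun X hX Y hY => add_mem_LambdaSet hX hY]
  constructor
  · intro hprim
    have h₁ := content_ne_zero_of_discrim_ne_zero hP
    have h₂ := content_ne_zero_of_discrim_ne_zero (hsame ▸ hP)
    by_contra hne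
    have hlt : 1 < content a b c * content a' b' c' := by
      rw [Nat.one_lt_iff_ne_zero_and_ne_one, Ne, Ne, mul_eq_one]
      exact ⟨mul_ne_zero h₁ h₂, hne⟩
    exact hprim ⟨_, hlt, fun X hX => mul_content_dvd_det hcop hX⟩
  · rintro ⟨h₁, h₂⟩ ⟨m, hm, hdvd⟩
    obtain ⟨X, hX, hndvd⟩ :=
      exists_mem_LambdaSet_not_dvd_det hsame h₁ h₂ (Nat.minFac_prime hm.ne')
    exact hndvd ((Int.natCast_dvd_natCast.2 (Nat.minFac_dvd m)).trans (hdvd X hX))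

theorem stmt17_general (a b c a' b' c' : ℤ) (hP : b ^ 2 - 4 * a * c ≠ 0)
    (hsame : b ^ 2 - 4 * a * c = b' ^ 2 - 4 * a' * c') :
    PrimitiveLat (LambdaSet (formMatrix a b c) (formMatrix a' b' c')) ↔
      (Int.gcd (Int.gcd (a / (Nat.gcd (content a b c) (content a' b' c') : ℤ))
            (b / (Nat.gcd (content a b c) (content a' b' c') : ℤ)))
          (c / (Nat.gcd (content a b c) (content a' b' c') : ℤ)) = 1 ∧
       Int.gcd (Int.gcd (a' / (Nat.gcd (content a b c) (content a' b' c') : ℤ))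
            (b' / (Nat.gcd (content a b c) (content a' b' c') : ℤ)))
          (c' / (Nat.gcd (content a b c) (content a' b' c') : ℤ)) = 1) := by
  have hk : Nat.gcd (content a b c) (content a' b' c') ≠ 0 :=
    (Nat.gcd_pos_of_pos_left _ (Nat.pos_of_ne_zero (content_ne_zero_of_discrim_ne_zero hP))).ne'
  generalize hkdef : Nat.gcd (content a b c) (content a' b' c') = k at hk ⊢
  obtain ⟨⟨a₁, rfl⟩, ⟨b₁, rfl⟩, ⟨c₁, rfl⟩⟩ :=
    natCast_dvd_content_iff.1 (hkdef ▸ Nat.gcd_dvd_left _ _ : k ∣ content a b c)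
  obtain ⟨⟨a₂, rfl⟩, ⟨b₂, rfl⟩, ⟨c₂, rfl⟩⟩ :=
    natCast_dvd_content_iff.1 (hkdef ▸ Nat.gcd_dvd_right _ _ : k ∣ content a' b' c')
  have hkZ : (k : ℤ) ≠ 0 := by exact_mod_cast hk
  simp only [Int.mul_ediv_cancel_left _ hkZ, content_mul, Int.natAbs_natCast, Nat.gcd_mul_left,
    Nat.mul_eq_left hk] at hkdef ⊢
  rw [← smul_formMatrix, ← smul_formMatrix, LambdaSet_smul hkZ]
  have hP₁ : discrim (k * a₁ : ℤ) (k * b₁) (k * c₁) ≠ 0 := hP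
  have hsame₁ : discrim (k * a₁ : ℤ) (k * b₁) (k * c₁) = discrim (k * a₂ : ℤ) (k * b₂) (k * c₂) :=
    hsame
  rw [discrim_mul] at hP₁
  rw [discrim_mul, discrim_mul] at hsame₁
  exact primitiveLat_LambdaSet_iff_of_coprime (right_ne_zero_of_mul hP₁)
    (mul_left_cancel₀ (pow_ne_zero 2 hkZ) hsame₁) hkdef

/-- `Λ(P,Q)` is primitive as an abstract lattice iff both `(1/λ)P` and `(1/λ)Q` are
primitive binary quadratic forms, where `λ` is the gcd of the contents of `P` and `Q`. -/
theorem stmt17 (a b c a' b' c' : ℤ) (hP : b ^ 2 - 4 * a * c ≠ 0)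
    (hQ : b' ^ 2 - 4 * a' * c' ≠ 0)
    (hsame : b ^ 2 - 4 * a * c = b' ^ 2 - 4 * a' * c') :
    PrimitiveLat (LambdaSet (formMatrix a b c) (formMatrix a' b' c')) ↔
      (Int.gcd (Int.gcd (a / (Nat.gcd (content a b c) (content a' b' c') : ℤ))
            (b / (Nat.gcd (content a b c) (content a' b' c') : ℤ)))
          (c / (Nat.gcd (content a b c) (content a' b' c') : ℤ)) = 1 ∧
       Int.gcd (Int.gcd (a' / (Nat.gcd (content a b c) (content a' b' c') : ℤ))
            (b' / (Nat.gcd (content a b c) (content a' b' c') : ℤ)))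
          (c' / (Nat.gcd (content a b c) (content a' b' c') : ℤ)) = 1) :=
  stmt17_general a b c a' b' c' hP hsame
end

section
/- Let A ∈ GL(2,Q) not be a scalar multiple of the identity. Then the linear map L_A on 2×2 rational matrices given by P ↦ A^t P A - (det A)·P has rank 2, and its kernel is the 2-dimensional span of [[0,1],[-1,0]] and [[-c, a-d],[0, b]] where A = [[a,b],[c,d]]. Moreover the subspace of symmetric matrices in ker L_A is exactly 1-dimensional. -/
/-!
With `J = !![0, 1; -1, 0]` one has `Aᵀ * J = J * adj A`, which yields the polynomial identity
`Aᵀ P A - (det A) P = J (adj A) (A (J P) - (J P) A)`. For invertible `A` the kernel of `L_A` is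
therefore `J⁻¹` times the centralizer of `A`. Commuting with `A` says that the vectors
`(a - d, b, c)` of `A` and `(p - s, q, r)` of `Q` have zero cross product; when `A` is not
scalar the first is nonzero, so they are proportional and the centralizer is `span {1, A}`.
Since `K = [[-c, a-d],[0, b]]` equals `a J - J A`, this is the stated span. A symmetric element
`s J + t K` of it must satisfy `2 s = -t (a - d)`, so the symmetric part of the kernel is the line
through `2 K - (a - d) J`.
-/

open Matrix Submodule

namespace CongruenceSubDet

section CommRing

variable {R : Type*} [CommRing R]

@[simps]
def congrSubDet {n : Type*} [Fintype n] [DecidableEq n] (A : Matrix n n R) :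
    Matrix n n R →ₗ[R] Matrix n n R where
  toFun P := Aᵀ * P * A - A.det • P
  map_add' P Q := by simp only [Matrix.mul_add, Matrix.add_mul, smul_add]; abel
  map_smul' c P := by simp only [Matrix.mul_smul, Matrix.smul_mul, smul_sub, smul_comm c A.det,
    RingHom.id_apply]

lemma mem_ker_congrSubDet {n : Type*} [Fintype n] [DecidableEq n] {A P : Matrix n n R} :
    P ∈ LinearMap.ker (congrSubDet A) ↔ Aᵀ * P * A = A.det • P :=
  sub_eq_zero

variable (R) in
def stdSymplectic : Matrix (Fin 2) (Fin 2) R := !![0, 1; -1, 0]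

lemma stdSymplectic_mul_self : stdSymplectic R * stdSymplectic R = -1 := by
  ext i j; fin_cases i <;> fin_cases j <;> simp [stdSymplectic]

lemma transpose_mul_mul_sub_det_smul (A P : Matrix (Fin 2) (Fin 2) R) :
    Aᵀ * P * A - A.det • P =
      stdSymplectic R * adjugate A * (A * (stdSymplectic R * P) - stdSymplectic R * P * A) := by
  ext i j; fin_cases i <;> fin_cases j <;>
    simp [stdSymplectic, adjugate_fin_two, det_fin_two, Matrix.mul_apply, Fin.sum_univ_two,
      vecMul, dotProduct] <;> ring

def nonscalarCoords (M : Matrix (Fin 2) (Fin 2) R) : Fin 3 → R := ![M 0 0 - M 1 1, M 0 1, M 1 0]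

lemma nonscalarCoords_ne_zero {M : Matrix (Fin 2) (Fin 2) R} (hM : ∀ q : R, M ≠ q • 1) :
    nonscalarCoords M ≠ 0 := by
  intro h
  have h0 := congr_fun h 0
  have h1 := congr_fun h 1
  have h2 := congr_fun h 2
  simp only [nonscalarCoords, Fin.isValue, cons_val_zero, cons_val_one, cons_val, Pi.zero_apply,
    sub_eq_zero] at h0 h1 h2
  apply hM (M 1 1)
  ext i j; fin_cases i <;> fin_cases j <;> simp [h0, h1, h2]

lemma cross_nonscalarCoords_eq_zero_of_commute {A Q : Matrix (Fin 2) (Fin 2) R}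
    (h : Commute A Q) : nonscalarCoords A ⨯₃ nonscalarCoords Q = 0 := by
  have h00 := congr_fun₂ h.eq 0 0
  have h01 := congr_fun₂ h.eq 0 1
  have h10 := congr_fun₂ h.eq 1 0
  simp only [Matrix.mul_apply, Fin.sum_univ_two] at h00 h01 h10
  ext i
  fin_cases i <;>
    simp only [nonscalarCoords, cross_apply, Fin.zero_eta, Fin.mk_one, Fin.reduceFinMk, Fin.isValue,
      Nat.succ_eq_add_one, Nat.reduceAdd, cons_val_zero, cons_val_one, cons_val, Pi.zero_apply]
  · linear_combination h00
  · linear_combination h10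
  · linear_combination h01

lemma mem_ker_congrSubDet_iff_commute {A P : Matrix (Fin 2) (Fin 2) R} (hA : IsUnit A.det) :
    P ∈ LinearMap.ker (congrSubDet A) ↔ Commute A (stdSymplectic R * P) := by
  have hunit : IsUnit (stdSymplectic R * adjugate A) := by
    rw [isUnit_iff_isUnit_det, det_mul, det_adjugate]
    simpa [stdSymplectic] using hA
  rw [LinearMap.mem_ker, congrSubDet_apply, transpose_mul_mul_sub_det_smul,
    hunit.mul_right_eq_zero, sub_eq_zero]
  rfl

def kerGen (A : Matrix (Fin 2) (Fin 2) R) : Matrix (Fin 2) (Fin 2) R :=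
  !![-(A 1 0), A 0 0 - A 1 1; 0, A 0 1]

lemma kerGen_eq (A : Matrix (Fin 2) (Fin 2) R) :
    kerGen A = A 0 0 • stdSymplectic R - stdSymplectic R * A := by
  ext i j; fin_cases i <;> fin_cases j <;> simp [kerGen, stdSymplectic, vecMul, dotProduct]

end CommRing

section Field

variable {K : Type*} [Field K]

lemma exists_eq_smul_one_add_smul_of_commute {A Q : Matrix (Fin 2) (Fin 2) K}
    (hA : ∀ q : K, A ≠ q • 1) (h : Commute A Q) : ∃ x y : K, Q = x • 1 + y • A := by
  obtain ⟨t, ht⟩ : ∃ t : K, t • nonscalarCoords A = nonscalarCoords Q := by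
    by_contra! hne
    exact crossProduct_ne_zero_iff_linearIndependent.mpr
      ((LinearIndependent.pair_iff' (nonscalarCoords_ne_zero hA)).mpr hne)
      (cross_nonscalarCoords_eq_zero_of_commute h)
  have h0 := congr_fun ht 0
  have h1 := congr_fun ht 1
  have h2 := congr_fun ht 2
  simp only [nonscalarCoords, Fin.isValue, Pi.smul_apply, cons_val_zero, cons_val_one, cons_val,
    smul_eq_mul] at h0 h1 h2
  refine ⟨Q 1 1 - t * A 1 1, t, ?_⟩
  ext i j
  fin_cases i <;> fin_cases j <;>
    simp only [Fin.zero_eta, Fin.mk_one, Fin.isValue, Matrix.add_apply, Matrix.smul_apply,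
      one_apply_eq, one_apply_ne, ne_eq, zero_ne_one, one_ne_zero, not_false_eq_true, smul_eq_mul,
      mul_one, mul_zero, zero_add, sub_add_cancel]
  · linear_combination -h0
  · linear_combination -h1
  · linear_combination -h2

theorem ker_congrSubDet_eq_span {A : Matrix (Fin 2) (Fin 2) K} (hdet : A.det ≠ 0)
    (hA : ∀ q : K, A ≠ q • 1) :
    LinearMap.ker (congrSubDet A) = span K {stdSymplectic K, kerGen A} := by
  apply le_antisymm
  · intro P hP
    obtain ⟨x, y, hxy⟩ := exists_eq_smul_one_add_smul_of_commute hA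
      ((mem_ker_congrSubDet_iff_commute hdet.isUnit).mp hP)
    have hP : P = -(stdSymplectic K * (stdSymplectic K * P)) := by
      rw [← Matrix.mul_assoc, stdSymplectic_mul_self, neg_one_mul, neg_neg]
    rw [mem_span_pair]
    refine ⟨-x - y * A 0 0, y, ?_⟩
    rw [hP, hxy, kerGen_eq, Matrix.mul_add, Matrix.mul_smul, Matrix.mul_smul, Matrix.mul_one]
    module
  · rw [span_le, Set.insert_subset_iff, Set.singleton_subset_iff, SetLike.mem_coe,
      SetLike.mem_coe, mem_ker_congrSubDet_iff_commute hdet.isUnit,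
      mem_ker_congrSubDet_iff_commute hdet.isUnit, kerGen_eq, Matrix.mul_sub, Matrix.mul_smul,
      ← Matrix.mul_assoc, stdSymplectic_mul_self]
    constructor
    · exact (Commute.one_right A).neg_right
    · rw [neg_one_mul, smul_neg, sub_neg_eq_add]
      exact ((Commute.one_right A).smul_right _).neg_right.add_right (Commute.refl A)

lemma linearIndependent_stdSymplectic_kerGen {A : Matrix (Fin 2) (Fin 2) K}
    (hA : ∀ q : K, A ≠ q • 1) : LinearIndependent K ![stdSymplectic K, kerGen A] := by
  have hJ : stdSymplectic K ≠ 0 := fun h ↦ by simpa [stdSymplectic] using congr_fun₂ h 0 1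
  rw [LinearIndependent.pair_iff' hJ]
  intro t ht
  have h10 := congr_fun₂ ht 1 0
  simp only [stdSymplectic, kerGen, Fin.isValue, Matrix.smul_apply, of_apply, cons_val',
    cons_val_zero, cons_val_one, cons_val_fin_one, smul_eq_mul, mul_neg, mul_one,
    neg_eq_zero] at h10
  subst h10
  apply nonscalarCoords_ne_zero hA
  have h00 := congr_fun₂ ht 0 0
  have h01 := congr_fun₂ ht 0 1
  have h11 := congr_fun₂ ht 1 1
  simp only [stdSymplectic, kerGen, Fin.isValue, Matrix.smul_apply, of_apply, cons_val',
    cons_val_zero, cons_val_one, cons_val_fin_one, smul_eq_mul, mul_zero,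
    zero_eq_neg] at h00 h01 h11
  ext i; fin_cases i <;> simp [nonscalarCoords, h00, ← h01, ← h11]

lemma finrank_span_stdSymplectic_kerGen {A : Matrix (Fin 2) (Fin 2) K}
    (hA : ∀ q : K, A ≠ q • 1) :
    Module.finrank K (span K {stdSymplectic K, kerGen A}) = 2 := by
  rw [← range_cons_cons_empty, finrank_span_eq_card (linearIndependent_stdSymplectic_kerGen hA)]
  simp

def symKerGen (A : Matrix (Fin 2) (Fin 2) K) : Matrix (Fin 2) (Fin 2) K :=
  !![-(2 * A 1 0), A 0 0 - A 1 1; A 0 0 - A 1 1, 2 * A 0 1]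

lemma symKerGen_ne_zero [NeZero (2 : K)] {A : Matrix (Fin 2) (Fin 2) K}
    (hA : ∀ q : K, A ≠ q • 1) : symKerGen A ≠ 0 := by
  intro h
  apply nonscalarCoords_ne_zero hA
  have h00 := congr_fun₂ h 0 0
  have h01 := congr_fun₂ h 0 1
  have h11 := congr_fun₂ h 1 1
  simp only [symKerGen, Fin.isValue, of_apply, cons_val', cons_val_zero, cons_val_one,
    cons_val_fin_one, Matrix.zero_apply, neg_eq_zero, mul_eq_zero, two_ne_zero,
    false_or] at h00 h01 h11
  ext i; fin_cases i <;> simp [nonscalarCoords, h00, h01, h11]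

theorem setOf_transpose_mul_mul_eq_det_smul_and_transpose_eq [NeZero (2 : K)]
    {A : Matrix (Fin 2) (Fin 2) K} (hdet : A.det ≠ 0) (hA : ∀ q : K, A ≠ q • 1) :
    {P | Aᵀ * P * A = A.det • P ∧ Pᵀ = P} = span K {symKerGen A} := by
  ext P
  rw [Set.mem_ofPred_eq, ← mem_ker_congrSubDet, ker_congrSubDet_eq_span hdet hA, mem_span_pair,
    SetLike.mem_coe, mem_span_singleton]
  constructor
  · rintro ⟨⟨s, t, rfl⟩, hsymm⟩
    have h := congr_fun₂ hsymm 1 0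
    simp only [stdSymplectic, kerGen, smul_of, smul_cons, smul_eq_mul, mul_zero, mul_one,
      smul_empty, mul_neg, Fin.isValue, of_add_of, add_cons, head_cons, zero_add, tail_cons,
      empty_add_empty, add_zero, transpose_apply, of_apply, cons_val', cons_val_one,
      cons_val_fin_one, cons_val_zero, Matrix.add_apply] at h
    obtain rfl : s = -(t * (A 0 0 - A 1 1)) / 2 := by
      field_simp
      linear_combination h
    refine ⟨t / 2, ?_⟩
    ext i j
    fin_cases i <;> fin_cases j <;> simp [stdSymplectic, kerGen, symKerGen] <;> field_simp
    ring
  · rintro ⟨t, rfl⟩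
    refine ⟨⟨-(t * (A 0 0 - A 1 1)), 2 * t, ?_⟩, ?_⟩ <;>
      ext i j <;> fin_cases i <;> fin_cases j <;> simp [stdSymplectic, kerGen, symKerGen] <;> ring

end Field

end CongruenceSubDet

open CongruenceSubDet in
/-- Let `A ∈ GL(2,ℚ)` not be a rational scalar multiple of the identity. Then the kernel of
`L_A : P ↦ Aᵀ P A - (det A) P` is the 2-dimensional span of `[[0,1],[-1,0]]` and
`[[-c, a-d],[0,b]]` (so `L_A` has rank 2), and the subspace of symmetric matrices in
`ker L_A` is exactly 1-dimensional. -/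
theorem stmt18 (A : Matrix (Fin 2) (Fin 2) ℚ) (hA : A.det ≠ 0)
    (hns : ∀ q : ℚ, A ≠ q • (1 : Matrix (Fin 2) (Fin 2) ℚ)) :
    ({P : Matrix (Fin 2) (Fin 2) ℚ | A.transpose * P * A = A.det • P} =
      ↑(Submodule.span ℚ
        ({!![0, 1; -1, 0], !![-(A 1 0), A 0 0 - A 1 1; 0, A 0 1]} :
          Set (Matrix (Fin 2) (Fin 2) ℚ)))) ∧
    Module.rank ℚ
      ↥(Submodule.span ℚ
        ({!![0, 1; -1, 0], !![-(A 1 0), A 0 0 - A 1 1; 0, A 0 1]} :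
          Set (Matrix (Fin 2) (Fin 2) ℚ))) = 2 ∧
    Module.rank ℚ
      ↥(Submodule.span ℚ
        {P : Matrix (Fin 2) (Fin 2) ℚ | A.transpose * P * A = A.det • P ∧ P.transpose = P})
      = 1 := by
  have hker : {P | Aᵀ * P * A = A.det • P} = (LinearMap.ker (congrSubDet A) : Set _) :=
    Set.ext fun _ ↦ mem_ker_congrSubDet.symm
  refine ⟨hker.trans (congrArg SetLike.coe (ker_congrSubDet_eq_span hA hns)), ?_, ?_⟩
  · rw [← Module.finrank_eq_rank]
    exact congrArg Nat.cast (finrank_span_stdSymplectic_kerGen hns)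
  · rw [setOf_transpose_mul_mul_eq_det_smul_and_transpose_eq hA hns, span_eq,
      ← Module.finrank_eq_rank, finrank_span_singleton (symKerGen_ne_zero hns), Nat.cast_one]
end
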